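/- arXiv:1611.07812 — 5 statements merged into one kernel-verified Lean document; each statement's English description precedes it below -/
import Mathlib

section
/- The converse inclusion of the rule-application soundness theorem fails: there exist a bounded atomistic lattice Λ, a lattice automaton A over Λ, and a rewriting rule R over Λ whose rewriting functions are monotone and map atoms to atoms, such that 𝓛(ApplyRule(R, A)) ⊄ R(𝓛(A)). (For instance, over the lattice of integer intervals one may take A with a single transition labeled [0,1], so that 𝓛(A) = {[0,0], [1,1]}, and the rule with guard a single letter ⊤ and rewriting functions f₁(x) = 2x and f₂(x) = 4x: then R(𝓛(A)) = {[0,0]·[0,0], [2,2]·[4,4]} while 𝓛(ApplyRule(R, A)) also contains the cross words [0,0]·[4,4] and [2,2]·[0,0].) -/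
/-- A lattice automaton over a lattice `Λ`: a set of initial states, a set of
final states, and a transition relation labeled by lattice elements. -/
structure LatAuto (Q Λ : Type*) where
  init : Set Q
  final : Set Q
  trans : Set (Q × Λ × Q)

/-- A path `q →^{λ₁⋯λ_m} q'` in a lattice automaton. -/
inductive LatAuto.Path {Q Λ : Type*} (A : LatAuto Q Λ) : Q → List Λ → Q → Prop
  | nil (q : Q) : LatAuto.Path A q [] q
  | cons {q p q' : Q} {a : Λ} {ls : List Λ} :
      (q, a, p) ∈ A.trans → LatAuto.Path A p ls q' → LatAuto.Path A q (a :: ls) q'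

/-- Pointwise order on words over `Λ`: same length and letterwise `≤`. -/
def WordLE {Λ : Type*} [LE Λ] (u v : List Λ) : Prop :=
  List.Forall₂ (· ≤ ·) u v

/-- The language of a lattice automaton: words of atoms that are letterwise
below the labels of some accepting path. -/
def LatAuto.Lang {Q Λ : Type*} [Preorder Λ] [OrderBot Λ] (A : LatAuto Q Λ) :
    Set (List Λ) :=
  {w | (∀ a ∈ w, IsAtom a) ∧
    ∃ q0 ∈ A.init, ∃ qf ∈ A.final, ∃ ls, A.Path q0 ls qf ∧ WordLE w ls}

/-- A rewriting rule over `Λ`, with guard `(g 0)⋆ · w 0 · (g 1)⋆ · w 1 ⋯ w (n-1) · (g n)⋆`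
(the words `w i`, `i < n`, are nonempty) and rewriting functions
`f 0 · h 0 · f 1 · h 1 ⋯ h n · f (n+1)`; the functions `f i : Λ^N → Λ*` and
`h i : Λ × Λ^N → Λ` receive the concatenation of the matched sub-words as a list. -/
structure RewRule (Λ : Type*) where
  n : ℕ
  g : ℕ → Λ
  w : ℕ → List Λ
  w_ne : ∀ i < n, w i ≠ []
  f : ℕ → List Λ → List Λ
  h : ℕ → Λ → List Λ → Λ

/-- `interleave n u v = u 0 ++ v 0 ++ u 1 ++ v 1 ++ ⋯ ++ v (n-1) ++ u n`. -/
def interleave {Λ : Type*} (n : ℕ) (u v : ℕ → List Λ) : List Λ :=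
  u 0 ++ ((List.range n).map fun i => v i ++ u (i + 1)).flatten

/-- Concatenation `v 0 ++ ⋯ ++ v (n-1)` of the matched sub-words. -/
def matchedVals {Λ : Type*} (n : ℕ) (v : ℕ → List Λ) : List Λ :=
  ((List.range n).map v).flatten

/-- The output word `v₀' · u₀' · v₁' · u₁' ⋯ vₙ' · uₙ' · v_{n+1}'` of a rewriting
rule on the decomposition `u, v`, where `v_i' = f i (v 0 ⋯ v (n-1))` and `u_i'`
replaces each letter `a` of `u i` by `h i a (v 0 ⋯ v (n-1))`. -/
def rewOutput {Λ : Type*} (R : RewRule Λ) (u v : ℕ → List Λ) : List Λ :=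
  R.f 0 (matchedVals R.n v) ++ (u 0).map (fun a => R.h 0 a (matchedVals R.n v)) ++
    ((List.range R.n).map fun i =>
      R.f (i + 1) (matchedVals R.n v) ++
        (u (i + 1)).map fun a => R.h (i + 1) a (matchedVals R.n v)).flatten ++
    R.f (R.n + 1) (matchedVals R.n v)

/-- `x` rewrites to `y` under the rule `R`: `x` decomposes as
`u 0 · v 0 · u 1 ⋯ v (n-1) · u n` with every letter of `u i` below `g i` and
`v i ⊑ w i`, and `y` is the corresponding output word. -/
def Rewrites {Λ : Type*} [Lattice Λ] (R : RewRule Λ) (x y : List Λ) : Prop :=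
  ∃ u v : ℕ → List Λ,
    x = interleave R.n u v ∧
    (∀ i ≤ R.n, ∀ a ∈ u i, a ≤ R.g i) ∧
    (∀ i < R.n, WordLE (v i) (R.w i)) ∧
    y = rewOutput R u v

/-- `R(L)`: the set of words obtained by rewriting a word of `L` under `R`. -/
def RewRule.image {Λ : Type*} [Lattice Λ] (R : RewRule Λ) (L : Set (List Λ)) :
    Set (List Λ) :=
  {y | ∃ x ∈ L, Rewrites R x y}

/-- The rewriting functions of `R` are monotone and map tuples of atoms to
words of atoms (for the `f i`), respectively to atoms (for the `h i`). -/
def RuleOK {Λ : Type*} [Lattice Λ] [OrderBot Λ] (R : RewRule Λ) : Prop :=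
  (∀ i ≤ R.n + 1, ∀ V V', WordLE V V' → WordLE (R.f i V) (R.f i V')) ∧
  (∀ i ≤ R.n + 1, ∀ V, (∀ a ∈ V, IsAtom a) → ∀ a ∈ R.f i V, IsAtom a) ∧
  (∀ i ≤ R.n, ∀ x x' V V', x ≤ x' → WordLE V V' → R.h i x V ≤ R.h i x' V') ∧
  (∀ i ≤ R.n, ∀ x V, IsAtom x → (∀ a ∈ V, IsAtom a) → IsAtom (R.h i x V))

/-- `matches(w, A)`: triples `(q_b, v, q_e)` such that `A` has a path from `q_b`
to `q_e` with labels `λ'` and `v = w ⊓ λ'` letterwise, all letters of `v`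
being different from `⊥`. -/
def MatchesSet {Q Λ : Type*} [Lattice Λ] [OrderBot Λ] (A : LatAuto Q Λ)
    (w : List Λ) : Set (Q × List Λ × Q) :=
  {t | ∃ ls, A.Path t.1 ls t.2.2 ∧ ls.length = w.length ∧
    t.2.1 = List.zipWith (· ⊓ ·) w ls ∧ ∀ x ∈ t.2.1, x ≠ (⊥ : Λ)}

/-- A choice of data for the `ApplyRule` algorithm: an initial state `q0`, a
final state `qf`, and a matching sequence `(mb i, mv i, me i) ∈ matches(w i, A)`
for each guard word `w i`, `i < n`. -/
structure RuleChoice {Q Λ : Type*} [Lattice Λ] [OrderBot Λ] (R : RewRule Λ)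
    (A : LatAuto Q Λ) where
  q0 : Q
  qf : Q
  hq0 : q0 ∈ A.init
  hqf : qf ∈ A.final
  mb : ℕ → Q
  mv : ℕ → List Λ
  me : ℕ → Q
  hm : ∀ i < R.n, (mb i, mv i, me i) ∈ MatchesSet A (R.w i)

/-- States of the automaton built by `ApplyRule`, before identification: states
of `A`, the two fresh states `q₋₁` (`Sum.inr (Sum.inl false)`) and `q_{n+1}`
(`Sum.inr (Sum.inl true)`), and the intermediate states of the fresh chains. -/
abbrev BaseSt (Q : Type*) := Q ⊕ (Bool ⊕ ℕ × ℕ)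

section ApplyRule

variable {Q Λ : Type*} [Lattice Λ] [OrderBot Λ]

/-- Concatenation `v^1 ⋯ v^n` of the matched values of a choice. -/
def choiceV (R : RewRule Λ) (A : LatAuto Q Λ) (c : RuleChoice R A) : List Λ :=
  matchedVals R.n c.mv

/-- The word `w_i' = f i (v^1, …, v^n)` labeling the `i`-th fresh chain. -/
def choiceOut (R : RewRule Λ) (A : LatAuto Q Λ) (c : RuleChoice R A) (i : ℕ) :
    List Λ :=
  R.f i (choiceV R A c)

/-- Source of the `i`-th fresh chain: `q₋₁` for `i = 0`, `q_b^i` for `1 ≤ i ≤ n`,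
and `q_f` for `i = n + 1`. -/
def chainSrc (R : RewRule Λ) (A : LatAuto Q Λ) (c : RuleChoice R A) (i : ℕ) :
    BaseSt Q :=
  if i = 0 then Sum.inr (Sum.inl false)
  else if i ≤ R.n then Sum.inl (c.mb (i - 1))
  else Sum.inl c.qf

/-- Target of the `i`-th fresh chain: `q₀` for `i = 0`, `q_e^i` for `1 ≤ i ≤ n`,
and `q_{n+1}` for `i = n + 1`. -/
def chainDst (R : RewRule Λ) (A : LatAuto Q Λ) (c : RuleChoice R A) (i : ℕ) :
    BaseSt Q :=
  if i = 0 then Sum.inl c.q0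
  else if i ≤ R.n then Sum.inl (c.me (i - 1))
  else Sum.inr (Sum.inl true)

/-- The `j`-th node of the `i`-th fresh chain. -/
def chainNode (R : RewRule Λ) (A : LatAuto Q Λ) (c : RuleChoice R A) (i j : ℕ) :
    BaseSt Q :=
  if j = 0 then chainSrc R A c i
  else if j = (choiceOut R A c i).length then chainDst R A c i
  else Sum.inr (Sum.inr (i, j))

/-- The transitions `δ^{seq}` of the fresh chains, labeled by the successive
letters of the words `w_i'`. -/
def seqTrans (R : RewRule Λ) (A : LatAuto Q Λ) (c : RuleChoice R A) :
    Set (BaseSt Q × Λ × BaseSt Q) :=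
  {t | ∃ i ≤ R.n + 1, ∃ j : ℕ, ∃ hj : j < (choiceOut R A c i).length,
    t = (chainNode R A c i j, (choiceOut R A c i).get ⟨j, hj⟩,
         chainNode R A c i (j + 1))}

/-- The transitions of the rewritten copies `A_i'` of `A`: every transition
label `a` of `A` is replaced by `h i (g i ⊓ a) (v^1, …, v^n)`, transitions
whose label meets `g i` at `⊥` or is rewritten to `⊥` being deleted. -/
def subTrans (R : RewRule Λ) (A : LatAuto Q Λ) (c : RuleChoice R A) :
    Set (BaseSt Q × Λ × BaseSt Q) :=
  {t | ∃ i ≤ R.n, ∃ q a q', (q, a, q') ∈ A.trans ∧ R.g i ⊓ a ≠ ⊥ ∧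
    R.h i (R.g i ⊓ a) (choiceV R A c) ≠ ⊥ ∧
    t = (Sum.inl q, R.h i (R.g i ⊓ a) (choiceV R A c), Sum.inl q')}

/-- Identification of the endpoints of a fresh chain whose labeling word is
empty. -/
def identRel (R : RewRule Λ) (A : LatAuto Q Λ) (c : RuleChoice R A)
    (x y : BaseSt Q) : Prop :=
  ∃ i ≤ R.n + 1, choiceOut R A c i = [] ∧
    x = chainSrc R A c i ∧ y = chainDst R A c i

/-- The automaton `A'` built by the `ApplyRule` algorithm for one choice of
matching sequences and initial/final states: the rewritten copies of `A`
together with the fresh chains, from the fresh initial state `q₋₁` to the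
fresh final state `q_{n+1}`, endpoints of empty chains being identified. -/
def singleAuto (R : RewRule Λ) (A : LatAuto Q Λ) (c : RuleChoice R A) :
    LatAuto (Quot (identRel R A c)) Λ where
  init := {Quot.mk _ (Sum.inr (Sum.inl false))}
  final := {Quot.mk _ (Sum.inr (Sum.inl true))}
  trans := {t | ∃ x a y, ((x, a, y) ∈ seqTrans R A c ∨ (x, a, y) ∈ subTrans R A c) ∧
    t = (Quot.mk _ x, a, Quot.mk _ y)}

/-- `ApplyRule(R, A)`: the union, over all choices of matching sequences and
initial/final states, of the automata `A'`. -/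
def ApplyRule (R : RewRule Λ) (A : LatAuto Q Λ) :
    LatAuto (Σ c : RuleChoice R A, Quot (identRel R A c)) Λ where
  init := {s | s.2 ∈ (singleAuto R A s.1).init}
  final := {s | s.2 ∈ (singleAuto R A s.1).final}
  trans := {t | ∃ (c : RuleChoice R A) (x y : Quot (identRel R A c)) (a : Λ),
    (x, a, y) ∈ (singleAuto R A c).trans ∧ t = (⟨c, x⟩, a, ⟨c, y⟩)}

end ApplyRule

/-- The data of a counterexample to the converse inclusion: `Λ` is atomistic,
the rewriting functions of `R` are monotone and map (tuples of) atoms to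
atoms, but `𝓛(ApplyRule(R, A)) ⊄ R(𝓛(A))`. -/
def RuleCounterexample (Λ : Type) [CompleteLattice Λ] (Q : Type)
    (A : LatAuto Q Λ) (R : RewRule Λ) : Prop :=
  IsAtomistic Λ ∧ RuleOK R ∧ ¬ (ApplyRule R A).Lang ⊆ R.image A.Lang

/-!
Take `Λ = Set Bool`, the one-state automaton `A` with a `⊤`-loop (so `𝓛(A)` is every word of
atoms), and the rule `⊥⋆ · ⊤ · ⊥⋆ ↦ x · x`. Rewriting a word of `𝓛(A)` can only turn an atom
`a` into `a · a`. But `ApplyRule` matches the guard letter `⊤` against the loop label `⊤`, so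
the matched value is `⊤`, not an atom, and its fresh chain is labelled `⊤ · ⊤`: it accepts
`{false} · {true}`, losing the correlation between the two copies.
-/

theorem subset_interleave {Λ : Type*} {n i : ℕ} (u v : ℕ → List Λ) (hi : i ≤ n) :
    u i ⊆ interleave n u v := by
  intro a ha
  rcases i with _ | k
  · exact List.mem_append_left _ ha
  · refine List.mem_append_right _ (List.mem_flatten.mpr ⟨v k ++ u (k + 1), ?_, ?_⟩)
    · exact List.mem_map.mpr ⟨k, List.mem_range.mpr hi, rfl⟩
    · exact List.mem_append_right _ ha

section ApplyRule

variable {Q Λ : Type*} [Lattice Λ] [OrderBot Λ]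

theorem path_chainNode_drop {R : RewRule Λ} {A : LatAuto Q Λ} {c : RuleChoice R A} {i : ℕ}
    (hi : i ≤ R.n + 1) {j : ℕ} (hj : j ≤ (choiceOut R A c i).length) :
    (ApplyRule R A).Path ⟨c, Quot.mk _ (chainNode R A c i j)⟩ ((choiceOut R A c i).drop j)
      ⟨c, Quot.mk _ (chainNode R A c i (choiceOut R A c i).length)⟩ := by
  induction hj using Nat.decreasingInduction with
  | self => rw [List.drop_length]; exact .nil _
  | of_succ j hj ih =>
    rw [List.drop_eq_getElem_cons hj]
    have hstep : (chainNode R A c i j, (choiceOut R A c i)[j], chainNode R A c i (j + 1)) ∈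
        seqTrans R A c := ⟨i, hi, j, hj, rfl⟩
    exact .cons ⟨c, _, _, _, ⟨_, _, _, Or.inl hstep, rfl⟩, rfl⟩ ih

theorem path_chain {R : RewRule Λ} {A : LatAuto Q Λ} (c : RuleChoice R A) {i : ℕ}
    (hi : i ≤ R.n + 1) :
    (ApplyRule R A).Path ⟨c, Quot.mk _ (chainSrc R A c i)⟩ (choiceOut R A c i)
      ⟨c, Quot.mk _ (chainDst R A c i)⟩ := by
  have hpath := path_chainNode_drop (c := c) hi (Nat.zero_le _)
  rw [List.drop_zero] at hpath
  by_cases hnil : choiceOut R A c i = []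
  · -- an empty chain is collapsed by `identRel` instead
    have hident : Quot.mk (identRel R A c) (chainSrc R A c i) = Quot.mk _ (chainDst R A c i) :=
      Quot.sound ⟨i, hi, hnil, rfl, rfl⟩
    rw [hnil, ← hident]
    exact .nil _
  · have hlen : (choiceOut R A c i).length ≠ 0 := by simpa using hnil
    simpa [chainNode, hlen] using hpath

end ApplyRule

def topLoop : LatAuto Unit (Set Bool) where
  init := Set.univ
  final := Set.univ
  trans := {((), ⊤, ())}

/-- The rule `⊥⋆ · ⊤ · ⊥⋆ ↦ x · x` duplicating its matched letter (`h` is irrelevant: the guard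
letters `⊥` match no atom). -/
def doublingRule : RewRule (Set Bool) where
  n := 1
  g := fun _ => ⊥
  w := fun _ => [⊤]
  w_ne := fun _ _ => List.cons_ne_nil _ _
  f := fun i V => if i = 1 then V ++ V else []
  h := fun _ _ _ => {false}

theorem doublingRule_ruleOK : RuleOK doublingRule := by
  refine ⟨fun i _ V V' hV => ?_, fun i _ V hV a ha => ?_, fun _ _ _ _ _ _ _ _ => le_rfl,
    fun _ _ _ _ _ _ => Set.isAtom_singleton false⟩
  · change WordLE (if i = 1 then V ++ V else []) (if i = 1 then V' ++ V' else [])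
    split
    · exact List.rel_append hV hV
    · exact .nil
  · change a ∈ (if i = 1 then V ++ V else []) at ha
    split at ha
    · rcases List.mem_append.mp ha with ha | ha <;> exact hV a ha
    · exact absurd ha List.not_mem_nil

theorem rewrites_doublingRule {x y : List (Set Bool)} (hx : ∀ a ∈ x, IsAtom a)
    (h : Rewrites doublingRule x y) : ∃ a, y = [a, a] := by
  obtain ⟨u, v, rfl, hu, hv, rfl⟩ := h
  have hu_nil : ∀ i ≤ 1, u i = [] := fun i hi =>
    List.eq_nil_iff_forall_not_mem.mpr fun a ha =>
      (hx a (subset_interleave u v hi ha)).1 (le_bot_iff.mp (hu i hi a ha))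
  obtain ⟨a, l, -, hnil, hv0⟩ := List.forall₂_cons_right_iff.mp (hv 0 Nat.one_pos)
  rw [List.forall₂_nil_right_iff.mp hnil] at hv0
  exact ⟨a, by
    simp [rewOutput, matchedVals, doublingRule, hu_nil 0 zero_le_one, hu_nil 1 le_rfl, hv0]⟩

def topMatch : RuleChoice doublingRule topLoop where
  q0 := ()
  qf := ()
  hq0 := Set.mem_univ _
  hqf := Set.mem_univ _
  mb := fun _ => ()
  mv := fun _ => [⊤]
  me := fun _ => ()
  hm := fun _ _ => ⟨[⊤], .cons rfl (.nil _), rfl, by simp [doublingRule],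
    fun _ hx => List.mem_singleton.mp hx ▸ top_ne_bot⟩

theorem pair_mem_lang_applyRule_doublingRule {a b : Set Bool} (ha : IsAtom a) (hb : IsAtom b) :
    [a, b] ∈ (ApplyRule doublingRule topLoop).Lang := by
  refine ⟨by simp [ha, hb], ⟨topMatch, Quot.mk _ (.inr (.inl false))⟩, rfl,
    ⟨topMatch, Quot.mk _ (.inr (.inl true))⟩, rfl, [⊤, ⊤], ?_, .cons le_top (.cons le_top .nil)⟩
  -- the empty chains `0` and `2` glue the chain `1`, labelled `⊤ · ⊤`, to the fresh end states
  have h0 : Quot.mk (identRel doublingRule topLoop topMatch) (.inr (.inl false)) =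
      Quot.mk _ (.inl ()) := Quot.sound ⟨0, Nat.zero_le _, rfl, rfl, rfl⟩
  have h2 : Quot.mk (identRel doublingRule topLoop topMatch) (.inl ()) =
      Quot.mk _ (.inr (.inl true)) := Quot.sound ⟨2, le_rfl, rfl, rfl, rfl⟩
  rw [h0, ← h2]
  exact path_chain topMatch (i := 1) le_add_self

/-- **The converse of the `ApplyRule` soundness theorem fails**: there exist a
bounded (complete) atomistic lattice `Λ`, a lattice automaton `A` over `Λ` and
a rewriting rule `R` over `Λ` with monotone, atom-preserving rewriting
functions such that `𝓛(ApplyRule(R, A)) ⊄ R(𝓛(A))`. -/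
theorem applyRule_not_complete :
    ∃ (Λ : Type) (inst : CompleteLattice Λ) (Q : Type) (A : LatAuto Q Λ)
      (R : RewRule Λ), @RuleCounterexample Λ inst Q A R := by
  refine ⟨Set Bool, inferInstance, Unit, topLoop, doublingRule, inferInstance,
    doublingRule_ruleOK, fun hsub => ?_⟩
  have hfalse := Set.isAtom_singleton false
  have htrue := Set.isAtom_singleton true
  obtain ⟨x, ⟨hx, -⟩, hrew⟩ := hsub (pair_mem_lang_applyRule_doublingRule hfalse htrue)
  obtain ⟨a, ha⟩ := rewrites_doublingRule hx hrew
  simp only [List.cons.injEq, and_true] at ha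
  exact absurd (ha.1.trans ha.2.symm) (by simp)
end

section
/- Let Λ be an atomistic complete lattice and N a natural number. In the complete lattice Fin N → Λ with the pointwise order, every tuple f : Fin N → Λ satisfying f i ≠ ⊥ for all i is the supremum of the tuples of atoms below it: f = sSup {g : Fin N → Λ | (∀ i, IsAtom (g i)) ∧ g ≤ f}. -/
/-!
Every atom `b ≤ f i` is the `i`-th component of a tuple of atoms below `f`: fill the other
coordinates with atoms below `f j`, which exist because `f j ≠ ⊥`. So the `i`-th component of
the supremum of these tuples bounds every atom below `f i`, hence bounds `f i` by atomisticity.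
-/

section

variable {ι α : Type*}

theorem exists_forall_isAtom_and_le [PartialOrder α] [OrderBot α] [IsAtomic α] {f : ι → α}
    (hf : ∀ i, f i ≠ ⊥) : ∃ a : ι → α, (∀ i, IsAtom (a i)) ∧ a ≤ f := by
  choose a ha haf using fun i ↦ (eq_bot_or_exists_atom_le (f i)).resolve_left (hf i)
  exact ⟨a, ha, haf⟩

theorem exists_forall_isAtom_and_le_and_apply_eq [DecidableEq ι] [PartialOrder α] [OrderBot α]
    [IsAtomic α] {f : ι → α} (hf : ∀ i, f i ≠ ⊥) {i : ι} {b : α} (hb : IsAtom b)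
    (hbf : b ≤ f i) : ∃ g : ι → α, ((∀ j, IsAtom (g j)) ∧ g ≤ f) ∧ g i = b := by
  obtain ⟨a, ha, haf⟩ := exists_forall_isAtom_and_le hf
  refine ⟨Function.update a i b, ⟨fun j ↦ ?_, update_le_iff.2 ⟨hbf, fun j _ ↦ haf j⟩⟩,
    Function.update_self i b a⟩
  rcases eq_or_ne j i with rfl | hj
  · simpa using hb
  · simpa [hj] using ha j

theorem eq_sSup_isAtom_tuples_le [CompleteLattice α] [IsAtomistic α] {f : ι → α}
    (hf : ∀ i, f i ≠ ⊥) : f = sSup {g : ι → α | (∀ i, IsAtom (g i)) ∧ g ≤ f} := by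
  classical
  refine le_antisymm (fun i ↦ ?_) (sSup_le fun g hg ↦ hg.2)
  rw [← sSup_atoms_le_eq (f i)]
  refine sSup_le ?_
  rintro b ⟨hb, hbf⟩
  obtain ⟨g, hg, rfl⟩ := exists_forall_isAtom_and_le_and_apply_eq hf hb hbf
  exact (le_sSup hg : g ≤ _) i

end

/-- If `Λ` is an atomistic complete lattice, then in the pointwise-ordered
complete lattice `Fin N → Λ`, every tuple with no `⊥` component is the
supremum of the tuples of atoms below it (this is the paper's claim that
`Λ^N` is atomistic with atoms `Atoms(Λ)^N`). -/
theorem pi_eq_sSup_atom_tuples {Λ : Type*} [CompleteLattice Λ] [IsAtomistic Λ]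
    (N : ℕ) (f : Fin N → Λ) (hf : ∀ i, f i ≠ ⊥) :
    f = sSup {g : Fin N → Λ | (∀ i, IsAtom (g i)) ∧ g ≤ f} :=
  eq_sSup_isAtom_tuples_le hf
end

section
/- Fix types Id, Loc, Env, let Σ = Id × Loc × Env, and fix locations l, l' : Loc and a transfer function step : Env → Env. Over the powerset lattice Λ = 𝒫(Σ) (whose atoms are the singletons), consider the rewriting rule R with guard G = ⊤*·⟨_, l, _⟩·⊤* (n = 1, star guards g₀ = g₁ = Σ, and the one-letter middle word w₁ = {(id, k, ρ) : k = l}) and rewriting functions F = Id*·f·Id*, where the star functions are the identity on the matched letter (h₀(x, v) = h₁(x, v) = x) and f(X) = {(id, l', step ρ) : (id, l, ρ) ∈ X}. Identifying each word σ₁⋯σ_m ∈ Σ* with the word of singletons {σ₁}⋯{σ_m}, for every language E ⊆ Σ* the rule computes exactly the post-image of the local instruction: R(E) = {x·(id, l', step ρ)·y : x·(id, l, ρ)·y ∈ E}. -/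
/-- The rewriting rule of a local instruction `(l, a, l')` over the powerset
lattice `𝒫(Σ)`, `Σ = Id × Loc × Env`: guard `⊤⋆ · ⟨_, l, _⟩ · ⊤⋆` (with
`n = 1`, `g 0 = g 1 = Σ` and middle word the one-letter word
`[{(id, k, ρ) | k = l}]`) and rewriting functions `Id⋆ · f · Id⋆`, where the
star functions are the identity and
`f(X) = {(id, l', step ρ) | (id, l, ρ) ∈ X}`. -/
def localRule {Id Loc Env : Type*} (l l' : Loc) (step : Env → Env) :
    RewRule (Set (Id × Loc × Env)) where
  n := 1
  g := fun _ => Set.univ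
  w := fun _ => [{s : Id × Loc × Env | s.2.1 = l}]
  w_ne := fun i _ => by simp
  f := fun i V =>
    if i = 1 then
      [{s : Id × Loc × Env | ∃ id ρ, (id, l, ρ) ∈ V.getD 0 ∅ ∧
        s = (id, l', step ρ)}]
    else []
  h := fun _ a _ => a

/-!
A word of singletons matches the guard `⊤⋆ · ⟨_, l, _⟩ · ⊤⋆` exactly when it splits as
`x · {σ} · y` with `σ` at location `l`; the star functions copy `x` and `y`, and `f` sends
`{(id, l, ρ)}` to `{(id, l', step ρ)}`, so the output is again a word of singletons.
-/

lemma List.map_eq_append_cons_iff {α β : Type*} {f : α → β} {w : List α} {a b : List β} {c : β} :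
    w.map f = a ++ c :: b ↔
      ∃ x σ y, w = x ++ σ :: y ∧ x.map f = a ∧ f σ = c ∧ y.map f = b := by
  constructor
  · intro h
    obtain ⟨x, r, rfl, rfl, hr⟩ := List.map_eq_append_iff.mp h
    obtain ⟨σ, y, rfl, rfl, rfl⟩ := List.map_eq_cons_iff.mp hr
    exact ⟨x, σ, y, rfl, rfl, rfl, rfl⟩
  · rintro ⟨x, σ, y, rfl, rfl, rfl, rfl⟩
    simp

section LocalRule

variable {Id Loc Env : Type*} (l l' : Loc) (step : Env → Env)

def localPost (V : Set (Id × Loc × Env)) : Set (Id × Loc × Env) :=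
  {s | ∃ id ρ, (id, l, ρ) ∈ V ∧ s = (id, l', step ρ)}

lemma localPost_singleton (id : Id) (ρ : Env) :
    localPost l l' step {(id, l, ρ)} = {(id, l', step ρ)} := by
  ext s
  simp [localPost]

lemma rewOutput_localRule (u v : ℕ → List (Set (Id × Loc × Env))) (V : Set (Id × Loc × Env))
    (hv : v 0 = [V]) :
    rewOutput (localRule l l' step) u v = u 0 ++ localPost l l' step V :: u 1 := by
  simp [rewOutput, localRule, localPost, matchedVals, List.range_succ, hv]

variable {l l' step} in
lemma rewrites_localRule_iff {x z : List (Set (Id × Loc × Env))} :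
    Rewrites (localRule l l' step) x z ↔
      ∃ a b V, V ⊆ {s | s.2.1 = l} ∧ x = a ++ V :: b ∧ z = a ++ localPost l l' step V :: b := by
  constructor
  · rintro ⟨u, v, rfl, -, hv, rfl⟩
    obtain ⟨V, _, hV, hnil, hv0⟩ := List.forall₂_cons_right_iff.mp (hv 0 one_pos)
    obtain rfl := List.forall₂_nil_right_iff.mp hnil
    exact ⟨u 0, u 1, V, hV, by simp [interleave, localRule, hv0],
      rewOutput_localRule l l' step u v V hv0⟩
  · rintro ⟨a, b, V, hV, rfl, rfl⟩
    refine ⟨fun i => if i = 0 then a else b, fun _ => [V], by simp [interleave, localRule],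
      by simp [localRule], fun _ _ => List.Forall₂.cons hV List.Forall₂.nil, ?_⟩
    simp [rewOutput_localRule l l' step (fun i => if i = 0 then a else b) (fun _ => [V]) V rfl]

end LocalRule

/-- **The symbolic rewriting rule of a local instruction computes its
post-image**: identifying each word `σ₁⋯σ_m ∈ Σ*` with the word of singletons
`{σ₁}⋯{σ_m}`, for every language `E ⊆ Σ*`,
`R(E) = {x·(id, l', step ρ)·y | x·(id, l, ρ)·y ∈ E}`. -/
theorem localRule_post {Id Loc Env : Type*} (l l' : Loc) (step : Env → Env)
    (E : Set (List (Id × Loc × Env))) :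
    (localRule l l' step).image
        ((List.map fun σ => ({σ} : Set (Id × Loc × Env))) '' E) =
      (List.map fun σ => ({σ} : Set (Id × Loc × Env))) ''
        {w' | ∃ (x y : List (Id × Loc × Env)) (id : Id) (ρ : Env),
          x ++ (id, l, ρ) :: y ∈ E ∧ w' = x ++ (id, l', step ρ) :: y} := by
  ext z
  simp only [RewRule.image, Set.mem_ofPred_eq, rewrites_localRule_iff]
  constructor
  · rintro ⟨_, ⟨w, hw, rfl⟩, a, b, V, hV, hw', rfl⟩
    obtain ⟨x, ⟨id, k, ρ⟩, y, rfl, rfl, rfl, rfl⟩ := List.map_eq_append_cons_iff.mp hw'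
    obtain rfl : k = l := hV rfl
    exact ⟨_, ⟨x, y, id, ρ, hw, rfl⟩, by simp [localPost_singleton]⟩
  · rintro ⟨_, ⟨x, y, id, ρ, hE, rfl⟩, rfl⟩
    refine ⟨_, ⟨_, hE, rfl⟩, x.map ({·}), y.map ({·}), {(id, l, ρ)}, by simp, by simp, ?_⟩
    simp [localPost_singleton]
end

section
/- Matching lemma: let Λ be a bounded lattice, A a lattice automaton over Λ and G = (g₀)*·w₁·(g₁)*·w₂⋯wₙ·(gₙ)* a guard with g_i ∈ Λ and nonempty words w_i over Λ. Suppose a word of atoms w ∈ 𝓛(A) decomposes as w = u₀·v₁·u₁·v₂⋯vₙ·uₙ where every letter of u_i is ≤ g_i and v_i ⊑ w_i for all i. Then there exist an initial state q₀ ∈ Q₀, a final state q_f ∈ Q_f, states q_b^1, q_e^1, …, q_b^n, q_e^n and an accepting path for w in A passing successively through q₀, q_b^1, q_e^1, …, q_b^n, q_e^n, q_f such that: the segment of the path reading v_i goes from q_b^i to q_e^i and its labels λ₁'⋯λ_{|w_i|}' give a matching sequence (q_b^i, v^i, q_e^i) ∈ matches(w_i, A) with v_i ⊑ v^i; and every transition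 label λ used while reading u_i satisfies g_i ⊓ λ ≠ ⊥. -/
/-!
Cut the accepting path for `x` at the boundaries of the decomposition of `x`. A letter `a` of
`u i` is an atom below both `g i` and the label `λ` it is read with, so `⊥ < a ≤ g i ⊓ λ`; a
letter of `v i` is an atom below both letters of `W i` and `ν i` at its position, so every
letter of `W i ⊓ ν i` is nonzero and `v i ⊑ W i ⊓ ν i`.
-/

theorem interleave_succ {α : Type*} (n : ℕ) (u v : ℕ → List α) :
    interleave (n + 1) u v =
      u 0 ++ v 0 ++ interleave n (fun i => u (i + 1)) (fun i => v (i + 1)) := by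
  simp [interleave, List.range_succ_eq_map, Function.comp_def]

namespace LatAuto

variable {Q Λ : Type*} {A : LatAuto Q Λ}

theorem Path.exists_of_append {q q' : Q} :
    ∀ {l₁ l₂ : List Λ}, A.Path q (l₁ ++ l₂) q' → ∃ p, A.Path q l₁ p ∧ A.Path p l₂ q'
  | [], _, h => ⟨q, .nil q, h⟩
  | _ :: _, _, .cons ht hp =>
    let ⟨p, h₁, h₂⟩ := Path.exists_of_append hp
    ⟨p, .cons ht h₁, h₂⟩

theorem Path.exists_split_of_forall₂_append {α : Type*} {R : α → Λ → Prop} {q q' : Q}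
    {ls : List Λ} {l₁ l₂ : List α} (h : A.Path q ls q') (hR : List.Forall₂ R (l₁ ++ l₂) ls) :
    ∃ p m₁ m₂, A.Path q m₁ p ∧ List.Forall₂ R l₁ m₁ ∧ A.Path p m₂ q' ∧ List.Forall₂ R l₂ m₂ := by
  rw [← List.take_append_drop l₁.length ls] at h
  obtain ⟨p, h₁, h₂⟩ := h.exists_of_append
  refine ⟨p, _, _, h₁, ?_, h₂, ?_⟩
  · simpa using List.forall₂_take l₁.length hR
  · simpa using List.forall₂_drop l₁.length hR

theorem Path.exists_split_of_forall₂_interleave {α : Type*} {R : α → Λ → Prop} (n : ℕ)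
    (u v : ℕ → List α) {q₀ q_f : Q} {ls : List Λ}
    (h : A.Path q₀ ls q_f) (hR : List.Forall₂ R (interleave n u v) ls) :
    ∃ (qb qe : ℕ → Q) (μ ν : ℕ → List Λ),
      (∀ i ≤ n, A.Path (if i = 0 then q₀ else qe (i - 1)) (μ i)
          (if i = n then q_f else qb i) ∧ List.Forall₂ R (u i) (μ i)) ∧
      (∀ i < n, A.Path (qb i) (ν i) (qe i) ∧ List.Forall₂ R (v i) (ν i)) := by
  induction n generalizing u v q₀ ls with
  | zero =>
    refine ⟨fun _ => q₀, fun _ => q₀, fun _ => ls, fun _ => [], ?_, by simp⟩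
    simp_all [interleave]
  | succ n ih =>
    rw [interleave_succ] at hR
    obtain ⟨p, m, m', hm, hRm, hm', hRm'⟩ := h.exists_split_of_forall₂_append hR
    obtain ⟨qb₀, μ₀, ν₀, hμ₀, hRμ₀, hν₀, hRν₀⟩ := hm.exists_split_of_forall₂_append hRm
    obtain ⟨qb, qe, μ, ν, hμ, hν⟩ := ih _ _ hm' hRm'
    refine ⟨fun i => if i = 0 then qb₀ else qb (i - 1), fun i => if i = 0 then p else qe (i - 1),
      fun i => if i = 0 then μ₀ else μ (i - 1), fun i => if i = 0 then ν₀ else ν (i - 1),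
      fun i hi => ?_, fun i hi => ?_⟩
    · cases i with
      | zero => simpa using ⟨hμ₀, hRμ₀⟩
      | succ i => simpa using hμ i (by omega)
    · cases i with
      | zero => simpa using ⟨hν₀, hRν₀⟩
      | succ i => simpa using hν i (by omega)

end LatAuto

namespace WordLE

variable {Λ : Type*}

theorem ne_bot_of_isAtom [PartialOrder Λ] [OrderBot Λ] :
    ∀ {l l' : List Λ}, WordLE l l' → (∀ a ∈ l, IsAtom a) → ∀ b ∈ l', b ≠ ⊥
  | _, _, .nil, _ => by simp
  | _, _, .cons hab h, hat => by
    rw [List.forall_mem_cons] at hat ⊢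
    exact ⟨ne_bot_of_le_ne_bot hat.1.ne_bot hab, ne_bot_of_isAtom h hat.2⟩

theorem map_inf_left [SemilatticeInf Λ] {g : Λ} {l l' : List Λ} (h : WordLE l l')
    (hg : ∀ a ∈ l, a ≤ g) : WordLE l (l'.map (g ⊓ ·)) :=
  List.forall₂_map_right_iff.2 <|
    ((List.forall₂_and_left _ _).2 ⟨hg, h⟩).imp fun _ _ h => le_inf h.1 h.2

theorem zipWith_inf [SemilatticeInf Λ] :
    ∀ {l l₁ l₂ : List Λ}, WordLE l l₁ → WordLE l l₂ → WordLE l (List.zipWith (· ⊓ ·) l₁ l₂)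
  | _, _, _, .nil, .nil => .nil
  | _, _, _, .cons h₁ hl₁, .cons h₂ hl₂ => .cons (le_inf h₁ h₂) (zipWith_inf hl₁ hl₂)

end WordLE

theorem matching_lemma_general {Q Λ : Type*} [Lattice Λ] [BoundedOrder Λ]
    (A : LatAuto Q Λ)
    (n : ℕ) (g : ℕ → Λ) (W : ℕ → List Λ)
    (u v : ℕ → List Λ) (x : List Λ)
    (hx : x ∈ A.Lang) (hdec : x = interleave n u v)
    (hu : ∀ i ≤ n, ∀ a ∈ u i, a ≤ g i)
    (hv : ∀ i < n, WordLE (v i) (W i)) :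
    ∃ (q0 qf : Q) (qb qe : ℕ → Q) (μ ν : ℕ → List Λ),
      q0 ∈ A.init ∧ qf ∈ A.final ∧
      (∀ i ≤ n,
        A.Path (if i = 0 then q0 else qe (i - 1)) (μ i)
          (if i = n then qf else qb i) ∧
        WordLE (u i) (μ i) ∧ ∀ l' ∈ μ i, g i ⊓ l' ≠ ⊥) ∧
      (∀ i < n,
        A.Path (qb i) (ν i) (qe i) ∧ WordLE (v i) (ν i) ∧
        (qb i, List.zipWith (· ⊓ ·) (W i) (ν i), qe i) ∈ MatchesSet A (W i) ∧
        WordLE (v i) (List.zipWith (· ⊓ ·) (W i) (ν i))) := by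
  obtain ⟨hatom, q0, hq0, qf, hqf, ls, hpath, hle⟩ := hx
  subst hdec
  -- Splitting along `fun a b => IsAtom a ∧ a ≤ b` keeps track of which letters are atoms.
  obtain ⟨qb, qe, μ, ν, hμ, hν⟩ := hpath.exists_split_of_forall₂_interleave n u v
    ((List.forall₂_and_left _ _).2 ⟨hatom, hle⟩)
  refine ⟨q0, qf, qb, qe, μ, ν, hq0, hqf, fun i hi => ?_, fun i hi => ?_⟩
  · obtain ⟨hp, hR⟩ := hμ i hi
    obtain ⟨hat, hl : WordLE (u i) (μ i)⟩ := (List.forall₂_and_left _ _).1 hR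
    exact ⟨hp, hl, fun l' hl' =>
      (hl.map_inf_left (hu i hi)).ne_bot_of_isAtom hat _ (List.mem_map_of_mem hl')⟩
  · obtain ⟨hp, hR⟩ := hν i hi
    obtain ⟨hat, hl : WordLE (v i) (ν i)⟩ := (List.forall₂_and_left _ _).1 hR
    have hmeet := (hv i hi).zipWith_inf hl
    have hlen : (ν i).length = (W i).length := by rw [← hl.length_eq, (hv i hi).length_eq]
    exact ⟨hp, hl, ⟨ν i, hp, hlen, rfl, hmeet.ne_bot_of_isAtom hat⟩, hmeet⟩

/-- **Matching lemma**: if a word of atoms `x ∈ 𝓛(A)` decomposes as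
`u 0 · v 0 · u 1 ⋯ v (n-1) · u n` with every letter of `u i` below `g i` and
`v i ⊑ W i`, then there are an initial state `q0`, a final state `qf`, states
`qb i, qe i` and an accepting path for `x` in `A` passing successively through
`q0, qb 0, qe 0, …, qb (n-1), qe (n-1), qf` such that the segment reading
`v i` goes from `qb i` to `qe i` and its labels `ν i` give a matching sequence
`(qb i, W i ⊓ ν i, qe i) ∈ matches(W i, A)` with `v i ⊑ W i ⊓ ν i`, and every
label `λ'` used while reading `u i` satisfies `g i ⊓ λ' ≠ ⊥`. -/
theorem matching_lemma {Q Λ : Type*} [Lattice Λ] [BoundedOrder Λ] [Finite Q]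
    (A : LatAuto Q Λ) (hAfin : A.trans.Finite)
    (hAbot : ∀ t ∈ A.trans, t.2.1 ≠ (⊥ : Λ))
    (n : ℕ) (g : ℕ → Λ) (W : ℕ → List Λ) (hW : ∀ i < n, W i ≠ [])
    (u v : ℕ → List Λ) (x : List Λ)
    (hx : x ∈ A.Lang) (hdec : x = interleave n u v)
    (hu : ∀ i ≤ n, ∀ a ∈ u i, a ≤ g i)
    (hv : ∀ i < n, WordLE (v i) (W i)) :
    ∃ (q0 qf : Q) (qb qe : ℕ → Q) (μ ν : ℕ → List Λ),
      q0 ∈ A.init ∧ qf ∈ A.final ∧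
      (∀ i ≤ n,
        A.Path (if i = 0 then q0 else qe (i - 1)) (μ i)
          (if i = n then qf else qb i) ∧
        WordLE (u i) (μ i) ∧ ∀ l' ∈ μ i, g i ⊓ l' ≠ ⊥) ∧
      (∀ i < n,
        A.Path (qb i) (ν i) (qe i) ∧ WordLE (v i) (ν i) ∧
        (qb i, List.zipWith (· ⊓ ·) (W i) (ν i), qe i) ∈ MatchesSet A (W i) ∧
        WordLE (v i) (List.zipWith (· ⊓ ·) (W i) (ν i))) :=
  matching_lemma_general A n g W u v x hx hdec hu hv
end

section
/- Let Λ be a bounded lattice, R a rewriting rule over Λ whose rewriting functions f_i and h_i are monotone and map tuples of atoms to words of atoms (respectively, to atoms), and A a lattice automaton over Λ. Suppose a word of atoms w ∈ 𝓛(A) decomposes as w = u₀·v₁·u₁⋯vₙ·uₙ matching the guard of R along an accepting path of A that yields matching sequences (q_b^i, v^i, q_e^i) ∈ matches(w_i, A) with v_i ⊑ v^i, as in the matching lemma. Let A' be the single automaton constructed by the ApplyRule algorithm for this choice of matching sequences, initial state and final state. Then the word w' obtained by rewriting w under R via this decomposition satisfies w' ∈ 𝓛(A'). -/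
/-!
The accepting path of `A` reading `x` splits into segments reading the `u_i`. In `A'` each
such segment is replayed on the same states of the rewritten copy `A_i'`: a transition labelled
`a` reading an atom `b ≤ g_i` becomes the transition labelled `h_i(g_i ⊓ a, v^1 ⋯ v^n)`, which
lies above the atom `h_i(b, v_1 ⋯ v_n)` by monotonicity of `h_i`, since `v_i ⊑ v^i`; in
particular it is not `⊥`, so it was not deleted. Between consecutive copies, the fresh chain
labelled `f_i(v^1 ⋯ v^n)` lies above `f_i(v_1 ⋯ v_n)` for the same reason. Concatenating the
chains and the replayed segments gives an accepting path of `A'` above the rewritten word.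
-/

namespace LatAuto.Path

variable {Q Λ : Type*} {A : LatAuto Q Λ}

theorem append {q p r : Q} {l l' : List Λ} (h₁ : A.Path q l p) (h₂ : A.Path p l' r) :
    A.Path q (l ++ l') r := by
  induction h₁ with
  | nil => exact h₂
  | cons ht _ ih => exact .cons ht (ih h₂)

theorem of_chain (node : ℕ → Q) :
    ∀ l : List Λ, (∀ j (hj : j < l.length), (node j, l[j], node (j + 1)) ∈ A.trans) →
      A.Path (node 0) l (node l.length)
  | [], _ => .nil _
  | a :: l, h =>
    .cons (h 0 (by simp)) <|
      of_chain (fun j => node (j + 1)) l fun j hj => h (j + 1) (by simpa using hj)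

theorem exists_flatten [LE Λ] (node : ℕ → Q) (W : ℕ → List Λ) (m : ℕ)
    (h : ∀ i < m, ∃ ls, A.Path (node i) ls (node (i + 1)) ∧ WordLE (W i) ls) :
    ∃ ls, A.Path (node 0) ls (node m) ∧ WordLE ((List.range m).map W).flatten ls := by
  induction m with
  | zero => exact ⟨[], .nil _, List.Forall₂.nil⟩
  | succ m ih =>
    obtain ⟨ls, hp, hle⟩ := ih fun i hi => h i (by omega)
    obtain ⟨ls', hp', hle'⟩ := h m (by omega)
    refine ⟨ls ++ ls', hp.append hp', ?_⟩
    simp only [List.range_succ, List.map_append, List.map_cons, List.map_nil,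
      List.flatten_append, List.flatten_cons, List.flatten_nil, List.append_nil]
    exact List.rel_append hle hle'

theorem simulate {Q' Λ' : Type*} [LE Λ] [LE Λ'] {B : LatAuto Q' Λ'} (φ : Q → Q')
    (F : Λ → Λ') (P : Λ → Prop)
    (hstep : ∀ q a q' b, (q, a, q') ∈ A.trans → b ≤ a → P b →
      ∃ a', (φ q, a', φ q') ∈ B.trans ∧ F b ≤ a')
    {q q' : Q} {μ : List Λ} (hp : A.Path q μ q') {x : List Λ} (hx : WordLE x μ)
    (hP : ∀ b ∈ x, P b) :
    ∃ ls, B.Path (φ q) ls (φ q') ∧ WordLE (x.map F) ls := by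
  induction hp generalizing x with
  | nil => cases hx; exact ⟨[], .nil _, List.Forall₂.nil⟩
  | cons ht _ ih =>
    obtain _ | ⟨hba, htail⟩ := hx
    obtain ⟨a', ht', hle⟩ := hstep _ _ _ _ ht hba (hP _ List.mem_cons_self)
    obtain ⟨ls, hp, hls⟩ := ih htail fun b hb => hP b (List.mem_cons_of_mem _ hb)
    exact ⟨a' :: ls, .cons ht' hp, .cons hle hls⟩

end LatAuto.Path

section Words

variable {α : Type*} {n i : ℕ} {u v : ℕ → List α} {a : α}

theorem mem_interleave_of_mem_left (hi : i ≤ n) (ha : a ∈ u i) : a ∈ interleave n u v := by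
  simp only [interleave, List.mem_append, List.mem_flatten, List.mem_map, List.mem_range]
  rcases i with _ | i
  · exact .inl ha
  · exact .inr ⟨_, ⟨i, by omega, rfl⟩, List.mem_append_right _ ha⟩

theorem mem_interleave_of_mem_right (hi : i < n) (ha : a ∈ v i) : a ∈ interleave n u v := by
  simp only [interleave, List.mem_append, List.mem_flatten, List.mem_map, List.mem_range]
  exact .inr ⟨_, ⟨i, hi, rfl⟩, List.mem_append_left _ ha⟩

theorem mem_matchedVals : a ∈ matchedVals n v ↔ ∃ i < n, a ∈ v i := by
  simp [matchedVals]

theorem wordLE_matchedVals [LE α] {v' : ℕ → List α} (h : ∀ i < n, WordLE (v i) (v' i)) :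
    WordLE (matchedVals n v) (matchedVals n v') := by
  apply List.rel_flatten
  rw [List.forall₂_map_left_iff, List.forall₂_map_right_iff, List.forall₂_same]
  exact fun i hi => h i (List.mem_range.mp hi)

theorem rewOutput_eq_flatten (R : RewRule α) (u v : ℕ → List α) :
    rewOutput R u v =
      ((List.range (R.n + 1)).map fun i =>
          R.f i (matchedVals R.n v) ++ (u i).map (R.h i · (matchedVals R.n v))).flatten ++
        R.f (R.n + 1) (matchedVals R.n v) := by
  simp [rewOutput, List.range_succ_eq_map, Function.comp_def]

end Words

theorem RuleOK.isAtom_of_mem_rewOutput {Λ : Type*} [Lattice Λ] [OrderBot Λ] {R : RewRule Λ}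
    (hR : RuleOK R) {u v : ℕ → List Λ} (hu : ∀ i ≤ R.n, ∀ a ∈ u i, IsAtom a)
    (hv : ∀ a ∈ matchedVals R.n v, IsAtom a) : ∀ a ∈ rewOutput R u v, IsAtom a := by
  obtain ⟨-, hf_atom, -, hh_atom⟩ := hR
  intro a ha
  simp only [rewOutput_eq_flatten, List.mem_append, List.mem_flatten, List.mem_map,
    List.mem_range] at ha
  rcases ha with ⟨_, ⟨i, hi, rfl⟩, ha⟩ | ha
  · rcases List.mem_append.mp ha with ha | ha
    · exact hf_atom i (by omega) _ hv a ha
    · obtain ⟨b, hb, rfl⟩ := List.mem_map.mp ha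
      exact hh_atom i (by omega) b _ (hu i (by omega) b hb) hv
  · exact hf_atom _ le_rfl _ hv a ha

section singleAuto

variable {Q Λ : Type*} [Lattice Λ] [OrderBot Λ] (R : RewRule Λ) (A : LatAuto Q Λ)
  (c : RuleChoice R A)

theorem chainSrc_zero : chainSrc R A c 0 = .inr (.inl false) := rfl

theorem chainSrc_succ {i : ℕ} (hi : i ≤ R.n) :
    chainSrc R A c (i + 1) = .inl (if i = R.n then c.qf else c.mb i) := by
  unfold chainSrc
  split_ifs <;> first | rfl | omega

theorem chainDst_of_le {i : ℕ} (hi : i ≤ R.n) :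
    chainDst R A c i = .inl (if i = 0 then c.q0 else c.me (i - 1)) := by
  by_cases h : i = 0 <;> simp [chainDst, h, hi]

theorem chainDst_last : chainDst R A c (R.n + 1) = .inr (.inl true) := by
  simp [chainDst]

theorem singleAuto_path_chain {i : ℕ} (hi : i ≤ R.n + 1) :
    (singleAuto R A c).Path (Quot.mk _ (chainSrc R A c i)) (choiceOut R A c i)
      (Quot.mk _ (chainDst R A c i)) := by
  by_cases hnil : choiceOut R A c i = []
  · rw [hnil, Quot.sound ⟨i, hi, hnil, rfl, rfl⟩]
    exact .nil _
  · have hlen : (choiceOut R A c i).length ≠ 0 := by simpa using hnil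
    have hp := LatAuto.Path.of_chain (A := singleAuto R A c)
      (fun j => Quot.mk _ (chainNode R A c i j)) (choiceOut R A c i)
      fun j hj => ⟨_, _, _, .inl ⟨i, hi, j, hj, rfl⟩, rfl⟩
    simpa [chainNode, hlen] using hp

variable {R A}

theorem singleAuto_path_copy (hR : RuleOK R) {V : List Λ} (hVle : WordLE V (choiceV R A c))
    (hV : ∀ a ∈ V, IsAtom a) {i : ℕ} (hi : i ≤ R.n) {q q' : Q} {μ ui : List Λ}
    (hp : A.Path q μ q') (hle : WordLE ui μ) (hatom : ∀ a ∈ ui, IsAtom a)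
    (hg : ∀ a ∈ ui, a ≤ R.g i) :
    ∃ ls, (singleAuto R A c).Path (Quot.mk _ (.inl q)) ls (Quot.mk _ (.inl q')) ∧
      WordLE (ui.map (R.h i · V)) ls := by
  obtain ⟨-, -, hh_mono, hh_atom⟩ := hR
  refine hp.simulate (B := singleAuto R A c) (fun q => Quot.mk _ (.inl q)) _
    (fun b => IsAtom b ∧ b ≤ R.g i) (fun q a q' b ht hba ⟨hb, hbg⟩ => ?_) hle
    fun b hb => ⟨hatom b hb, hg b hb⟩
  have hb_le : b ≤ R.g i ⊓ a := le_inf hbg hba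
  have hmono : R.h i b V ≤ R.h i (R.g i ⊓ a) (choiceV R A c) :=
    hh_mono i hi _ _ _ _ hb_le hVle
  have hne : R.h i (R.g i ⊓ a) (choiceV R A c) ≠ ⊥ :=
    ne_bot_of_le_ne_bot (hh_atom i hi b V hb hV).1 hmono
  exact ⟨_, ⟨_, _, _, .inr ⟨i, hi, q, a, q', ht, ne_bot_of_le_ne_bot hb.1 hb_le, hne, rfl⟩,
    rfl⟩, hmono⟩

/-- The fresh chain `i` followed by the copy `A_i'`. -/
theorem singleAuto_path_piece (hR : RuleOK R) {V : List Λ} (hVle : WordLE V (choiceV R A c))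
    (hV : ∀ a ∈ V, IsAtom a) {i : ℕ} (hi : i ≤ R.n) {μ ui : List Λ}
    (hp : A.Path (if i = 0 then c.q0 else c.me (i - 1)) μ
      (if i = R.n then c.qf else c.mb i))
    (hle : WordLE ui μ) (hatom : ∀ a ∈ ui, IsAtom a) (hg : ∀ a ∈ ui, a ≤ R.g i) :
    ∃ ls, (singleAuto R A c).Path (Quot.mk _ (chainSrc R A c i)) ls
        (Quot.mk _ (chainSrc R A c (i + 1))) ∧
      WordLE (R.f i V ++ ui.map (R.h i · V)) ls := by
  obtain ⟨ls, hcopy, hls⟩ := singleAuto_path_copy c hR hVle hV hi hp hle hatom hg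
  have hchain := singleAuto_path_chain R A c (i := i) (by omega)
  rw [chainDst_of_le R A c hi] at hchain
  rw [chainSrc_succ R A c hi]
  exact ⟨_, hchain.append hcopy, List.rel_append (hR.1 i (by omega) _ _ hVle) hls⟩

end singleAuto

theorem singleAuto_recognizes_rewrite_general {Q Λ : Type*} [Lattice Λ]
    [BoundedOrder Λ] (R : RewRule Λ) (A : LatAuto Q Λ)
    (hR : RuleOK R) (c : RuleChoice R A) (u v : ℕ → List Λ) (x : List Λ)
    (hx : x ∈ A.Lang)
    (hdec : x = interleave R.n u v)
    (hu : ∀ i ≤ R.n, ∀ a ∈ u i, a ≤ R.g i)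
    (hlink : ∀ i < R.n, WordLE (v i) (c.mv i))
    (hseg : ∀ i ≤ R.n, ∃ μ : List Λ,
      A.Path (if i = 0 then c.q0 else c.me (i - 1)) μ
        (if i = R.n then c.qf else c.mb i) ∧ WordLE (u i) μ) :
    rewOutput R u v ∈ (singleAuto R A c).Lang := by
  obtain ⟨hxatom, -⟩ := hx
  subst hdec
  have huatom : ∀ i ≤ R.n, ∀ a ∈ u i, IsAtom a := fun i hi a ha =>
    hxatom a (mem_interleave_of_mem_left hi ha)
  have hVatom : ∀ a ∈ matchedVals R.n v, IsAtom a := fun a ha => by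
    obtain ⟨i, hi, ha⟩ := mem_matchedVals.mp ha
    exact hxatom a (mem_interleave_of_mem_right hi ha)
  have hVle : WordLE (matchedVals R.n v) (choiceV R A c) := wordLE_matchedVals hlink
  obtain ⟨ls, hp, hle⟩ := LatAuto.Path.exists_flatten
    (fun i => Quot.mk _ (chainSrc R A c i)) _ (R.n + 1) fun i hi => by
      obtain ⟨μ, hμ, hμle⟩ := hseg i (by omega)
      exact singleAuto_path_piece c hR hVle hVatom (by omega) hμ hμle
        (huatom i (by omega)) (hu i (by omega))
  have hlast := singleAuto_path_chain R A c le_rfl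
  rw [chainDst_last] at hlast
  rw [chainSrc_zero] at hp
  refine ⟨hR.isAtom_of_mem_rewOutput huatom hVatom, _, rfl, _, rfl, _, hp.append hlast, ?_⟩
  rw [rewOutput_eq_flatten]
  exact List.rel_append hle (hR.1 _ le_rfl _ _ hVle)

/-- **Concluding step of the `ApplyRule` soundness proof**: suppose the word of
atoms `x ∈ 𝓛(A)` decomposes as `u 0 · v 0 · u 1 ⋯ v (n-1) · u n` matching the
guard of `R` (letters of `u i` below `g i`, `v i ⊑ w i`) along an accepting
path of `A` passing through the states of the choice `c` (the path segment
reading `u i` goes from `c.q0`/`c.me (i-1)` to `c.mb i`/`c.qf`), the matching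
sequences `(c.mb i, c.mv i, c.me i) ∈ matches(w i, A)` of `c` satisfying
`v i ⊑ c.mv i`. Then the word obtained by rewriting `x` under `R` via this
decomposition is recognized by the single automaton `A'` constructed by the
`ApplyRule` algorithm for this choice. -/
theorem singleAuto_recognizes_rewrite {Q Λ : Type*} [Lattice Λ]
    [BoundedOrder Λ] [Finite Q] (R : RewRule Λ) (A : LatAuto Q Λ)
    (hAfin : A.trans.Finite) (hAbot : ∀ t ∈ A.trans, t.2.1 ≠ (⊥ : Λ))
    (hR : RuleOK R) (c : RuleChoice R A) (u v : ℕ → List Λ) (x : List Λ)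
    (hx : x ∈ A.Lang)
    (hdec : x = interleave R.n u v)
    (hu : ∀ i ≤ R.n, ∀ a ∈ u i, a ≤ R.g i)
    (hv : ∀ i < R.n, WordLE (v i) (R.w i))
    (hlink : ∀ i < R.n, WordLE (v i) (c.mv i))
    (hseg : ∀ i ≤ R.n, ∃ μ : List Λ,
      A.Path (if i = 0 then c.q0 else c.me (i - 1)) μ
        (if i = R.n then c.qf else c.mb i) ∧ WordLE (u i) μ) :
    rewOutput R u v ∈ (singleAuto R A c).Lang :=
  singleAuto_recognizes_rewrite_general R A hR c u v x hx hdec hu hlink hseg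
end
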